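/- Fix an integer a ≥ 2 and let a_0 ≥ 0 and a_1, …, a_n be integers with 1 ≤ a_i ≤ a − 1 for 1 ≤ i ≤ n. Consider the rational x = [a_0; a_1, …, a_n, a − 1, 1, a] (a finite continued fraction, lying in [0, a) when a_0 ≤ a − 1). Then r_a(x) = [a_0; a_1, …, a_n, a] and r_a(r_a(x)) = [a_0; a_1, …, a_n]; that is, the approximation of x evolves dynamically under r_a in two steps. -/
import Mathlib


/-- One step of the Gauss continued-fraction algorithm (returns `0` upon termination). -/
noncomputable def cfStep (y : ℝ) : ℝ := if Int.fract y = 0 then 0 else (Int.fract y)⁻¹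

/-- Iterates of the Gauss map used to compute the canonical continued fraction of `x`. -/
noncomputable def cfIter (x : ℝ) : ℕ → ℝ
  | 0 => x
  | n + 1 => cfStep (cfIter x n)

/-- The `n`-th partial quotient of the canonical continued fraction expansion of `x`
(by convention it is `0` past the end of a finite expansion). -/
noncomputable def pquot (x : ℝ) (n : ℕ) : ℤ := ⌊cfIter x n⌋

/-- Value of a finite continued fraction `[a₀; a₁, …, aₙ]`. -/
noncomputable def cfEval : List ℤ → ℝ
  | [] => 0
  | [a] => (a : ℝ)
  | a :: l => (a : ℝ) + (cfEval l)⁻¹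

/-- The canonical continued fraction expansion of `x` is exactly `[A 0; A 1, …, A n]`. -/
def IsCanonCF (x : ℝ) (A : ℕ → ℤ) (n : ℕ) : Prop :=
  (∀ i ≤ n, pquot x i = A i) ∧ Int.fract (cfIter x n) = 0 ∧ ∀ i < n, Int.fract (cfIter x i) ≠ 0

/-- The `n`-th convergent `pₙ/qₙ = [x₀; x₁, …, xₙ]` of `x`. -/
noncomputable def cfConv (x : ℝ) (n : ℕ) : ℝ := cfEval ((List.range (n + 1)).map (pquot x))

open scoped Classical in
/-- The resolution map `r_a`: truncate the canonical continued fraction expansion just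
before the first partial quotient `xᵢ` (`i ≥ 1`) with `xᵢ ≥ a`; identity otherwise. -/
noncomputable def ra (a : ℕ) (x : ℝ) : ℝ :=
  if h : ∃ i, 1 ≤ i ∧ (a : ℤ) ≤ pquot x i then
    cfEval ((List.range (Nat.find h)).map (pquot x))
  else x

/-- The locking zone `Z_a(r) = {x ∈ [0, a) : r_a(x) = r}`. -/
noncomputable def lockZone (a : ℕ) (r : ℝ) : Set ℝ :=
  {x | x ∈ Set.Ico (0 : ℝ) (a : ℝ) ∧ ra a x = r}

/-- Right boundary `ν⁺` of a locking zone. -/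
noncomputable def nuPlus (a : ℕ) (r : ℝ) : ℝ := sSup (lockZone a r)

/-- Left boundary `ν⁻` of a locking zone. -/
noncomputable def nuMinus (a : ℕ) (r : ℝ) : ℝ := sInf (lockZone a r)


/- Auxiliary lemmas -/

lemma cfEval_nil' : cfEval [] = 0 := rfl

lemma cfEval_singleton' (a : ℤ) : cfEval [a] = a := rfl

lemma cfEval_cons (a : ℤ) (l : List ℤ) (h : l ≠ []) :
    cfEval (a :: l) = a + (cfEval l)⁻¹ := by
  cases l with
  | nil => simp at h
  | cons b m => rfl

lemma one_lt_cfEval : ∀ (l : List ℤ), l ≠ [] → (∀ x ∈ l, 1 ≤ x) →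
    (∀ m, l.getLast? = some m → 2 ≤ m) → 1 < cfEval l := by
  intro l
  induction l with
  | nil => intro h; simp at h
  | cons a m ih =>
    intro _ h1 h2
    cases m with
    | nil =>
      have : (2:ℤ) ≤ a := h2 a (by simp)
      rw [cfEval_singleton']
      exact_mod_cast lt_of_lt_of_le one_lt_two (by exact_mod_cast this)
    | cons b r =>
      have hm : (b :: r : List ℤ) ≠ [] := by simp
      have ih' : 1 < cfEval (b :: r) := by
        refine ih hm (fun x hx => h1 x (by simp [hx])) ?_
        intro m hm'
        exact h2 m (by rwa [List.getLast?_cons_cons])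
      rw [cfEval_cons _ _ hm]
      have ha : (1:ℝ) ≤ a := by exact_mod_cast h1 a (by simp)
      have : 0 < (cfEval (b :: r))⁻¹ := inv_pos.mpr (lt_trans one_pos ih')
      linarith

lemma cfStep_intCast (a : ℤ) : cfStep (a : ℝ) = 0 := by
  simp [cfStep, Int.fract_intCast]

lemma cfIter_zero_fun (k : ℕ) : cfIter 0 k = 0 := by
  induction k with
  | zero => rfl
  | succ k ih => show cfStep (cfIter 0 k) = 0; rw [ih]; simpa using cfStep_intCast 0

lemma cfIter_succ_left (x : ℝ) (k : ℕ) : cfIter x (k + 1) = cfIter (cfStep x) k := by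
  induction k with
  | zero => rfl
  | succ k ih => show cfStep (cfIter x (k+1)) = cfStep (cfIter (cfStep x) k); rw [ih]

lemma fract_cfEval_cons (a : ℤ) (l : List ℤ) (h : l ≠ []) (h1 : ∀ x ∈ l, 1 ≤ x)
    (h2 : ∀ m, l.getLast? = some m → 2 ≤ m) :
    Int.fract (cfEval (a :: l)) = (cfEval l)⁻¹ := by
  have hlt := one_lt_cfEval l h h1 h2
  have h0 : (0:ℝ) < (cfEval l)⁻¹ := inv_pos.mpr (lt_trans one_pos hlt)
  have h1' : (cfEval l)⁻¹ < 1 := inv_lt_one_of_one_lt₀ hlt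
  rw [cfEval_cons a l h, Int.fract_intCast_add, Int.fract_eq_self.mpr ⟨le_of_lt h0, h1'⟩]

lemma cfStep_cfEval_cons (a : ℤ) (l : List ℤ) (h : l ≠ []) (h1 : ∀ x ∈ l, 1 ≤ x)
    (h2 : ∀ m, l.getLast? = some m → 2 ≤ m) :
    cfStep (cfEval (a :: l)) = cfEval l := by
  have hlt := one_lt_cfEval l h h1 h2
  have h0 : (0:ℝ) < (cfEval l)⁻¹ := inv_pos.mpr (lt_trans one_pos hlt)
  rw [cfStep, fract_cfEval_cons a l h h1 h2, if_neg (ne_of_gt h0), inv_inv]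

lemma floor_cfEval_cons (a : ℤ) (l : List ℤ) (h1 : ∀ x ∈ l, 1 ≤ x)
    (h2 : ∀ m, l.getLast? = some m → 2 ≤ m) :
    ⌊cfEval (a :: l)⌋ = a := by
  rcases eq_or_ne l [] with rfl | h
  · show ⌊((a:ℝ))⌋ = a; exact Int.floor_intCast a
  · have hlt := one_lt_cfEval l h h1 h2
    have h0 : (0:ℝ) < (cfEval l)⁻¹ := inv_pos.mpr (lt_trans one_pos hlt)
    have h1' : (cfEval l)⁻¹ < 1 := inv_lt_one_of_one_lt₀ hlt
    rw [cfEval_cons a l h, Int.floor_intCast_add, Int.floor_eq_zero_iff.mpr ⟨le_of_lt h0, h1'⟩,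
      add_zero]

lemma pquot_cfEval : ∀ (t : List ℤ) (b : ℤ), (∀ x ∈ t, 1 ≤ x) →
    (∀ m, t.getLast? = some m → 2 ≤ m) →
    ∀ k, pquot (cfEval (b :: t)) k = (b :: t).getD k 0 := by
  intro t
  induction t with
  | nil =>
    intro b _ _ k
    cases k with
    | zero => show ⌊((b:ℝ))⌋ = b; exact Int.floor_intCast b
    | succ k =>
      show ⌊cfIter ((b:ℝ)) (k+1)⌋ = _
      rw [cfIter_succ_left, cfStep_intCast, cfIter_zero_fun]
      simp
  | cons c r ih =>
    intro b h1 h2 k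
    have hr1 : ∀ x ∈ r, 1 ≤ x := fun x hx => h1 x (by simp [hx])
    have hr2 : ∀ m, r.getLast? = some m → 2 ≤ m := by
      intro m hm
      cases r with
      | nil => simp at hm
      | cons d s => exact h2 m (by rwa [List.getLast?_cons_cons])
    cases k with
    | zero => exact floor_cfEval_cons b (c :: r) h1 h2
    | succ k =>
      show ⌊cfIter (cfEval (b :: c :: r)) (k+1)⌋ = _
      rw [cfIter_succ_left, cfStep_cfEval_cons b (c :: r) (by simp) h1 h2]
      exact ih c hr1 hr2 k

open scoped Classical in
lemma ra_cfEval (a : ℕ) (b : ℤ) (t : List ℤ) (h1 : ∀ x ∈ t, 1 ≤ x)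
    (h2 : ∀ m, t.getLast? = some m → 2 ≤ m) (j : ℕ) (hj1 : 1 ≤ j)
    (hjlen : j ≤ t.length)
    (hja : (a : ℤ) ≤ (b :: t).getD j 0)
    (hlt : ∀ i, 1 ≤ i → i < j → (b :: t).getD i 0 < a) :
    ra a (cfEval (b :: t)) = cfEval ((b :: t).take j) := by
  have hp := pquot_cfEval t b h1 h2
  have hex : ∃ i, 1 ≤ i ∧ (a : ℤ) ≤ pquot (cfEval (b :: t)) i := ⟨j, hj1, by rw [hp]; exact hja⟩
  rw [ra, dif_pos hex]
  have hfind : Nat.find hex = j := by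
    rw [Nat.find_eq_iff]
    refine ⟨⟨hj1, by rw [hp]; exact hja⟩, ?_⟩
    intro i hi hcon
    obtain ⟨hi1, hia⟩ := hcon
    rw [hp] at hia
    exact absurd hia (not_le.mpr (hlt i hi1 hi))
  rw [hfind]
  congr 1
  apply List.ext_getElem
  · simp only [List.length_map, List.length_range, List.length_take, List.length_cons]
    omega
  · intro i hi1 hi2
    simp only [List.getElem_map, List.getElem_range, List.getElem_take]
    rw [hp i, List.getD_eq_getElem]

lemma cfEval_append_one : ∀ (l : List ℤ) (c : ℤ),
    cfEval (l ++ [c, 1]) = cfEval (l ++ [c + 1]) := by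
  intro l
  induction l with
  | nil =>
    intro c
    show cfEval [c, 1] = cfEval [c + 1]
    rw [cfEval_cons c [1] (by simp)]
    show (c:ℝ) + (((1:ℤ):ℝ))⁻¹ = ((c + 1 : ℤ) : ℝ)
    push_cast
    norm_num
  | cons x l ih =>
    intro c
    rw [List.cons_append, List.cons_append, cfEval_cons x _ (by simp),
      cfEval_cons x _ (by simp), ih]

/-- For `x = [a₀; a₁, …, aₙ, a-1, 1, a]` with `1 ≤ aᵢ ≤ a - 1`
for `1 ≤ i ≤ n`, one has `r_a(x) = [a₀; …, aₙ, a]` and `r_a(r_a(x)) = [a₀; …, aₙ]`. -/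
theorem stmt_11 (a : ℕ) (ha : 2 ≤ a) (n : ℕ) (A : ℕ → ℤ) (h0 : 0 ≤ A 0)
    (hbd : ∀ i, 1 ≤ i → i ≤ n → 1 ≤ A i ∧ A i ≤ (a : ℤ) - 1) :
    ra a (cfEval ((List.range (n + 1)).map A ++ [(a : ℤ) - 1, 1, (a : ℤ)])) =
      cfEval ((List.range (n + 1)).map A ++ [(a : ℤ)]) ∧
    ra a (ra a (cfEval ((List.range (n + 1)).map A ++ [(a : ℤ) - 1, 1, (a : ℤ)]))) =
      cfEval ((List.range (n + 1)).map A) := by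
  have ha2 : (2:ℤ) ≤ (a:ℤ) := by exact_mod_cast ha
  set T : List ℤ := (List.range n).map (fun i => A (i + 1)) with hTdef
  have hL : (List.range (n + 1)).map A = A 0 :: T := by
    rw [List.range_succ_eq_map]
    simp [hTdef, List.map_map, Function.comp]
  have hTlen : T.length = n := by simp [hTdef]
  have hgetT : ∀ i < n, T.getD i 0 = A (i + 1) := by
    intro i hi
    rw [List.getD_eq_getElem _ _ (by omega)]
    simp [hTdef]
  have hT1 : ∀ x ∈ T, 1 ≤ x := by
    intro x hx
    simp only [hTdef, List.mem_map, List.mem_range] at hx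
    obtain ⟨i, hi, rfl⟩ := hx
    exact (hbd (i+1) (by omega) (by omega)).1
  -- first application
  have h11 : ∀ x ∈ T ++ [(a:ℤ)-1, 1, (a:ℤ)], 1 ≤ x := by
    intro x hx
    rcases List.mem_append.mp hx with h | h
    · exact hT1 x h
    · simp at h; rcases h with rfl | rfl | rfl <;> omega
  have h21 : ∀ m, (T ++ [(a:ℤ)-1, 1, (a:ℤ)]).getLast? = some m → 2 ≤ m := by
    intro m hm
    rw [List.getLast?_append_of_ne_nil _ (by simp)] at hm
    simp at hm
    omega
  have hja1 : (a:ℤ) ≤ (A 0 :: (T ++ [(a:ℤ)-1, 1, (a:ℤ)])).getD (n+3) 0 := by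
    rw [List.getD_cons_succ, List.getD_append_right _ _ _ _ (by omega),
      show n + 2 - T.length = 2 by omega]
    simp [List.getD]
  have hlt1 : ∀ i, 1 ≤ i → i < n + 3 →
      (A 0 :: (T ++ [(a:ℤ)-1, 1, (a:ℤ)])).getD i 0 < a := by
    intro i hi1 hi3
    obtain ⟨i', rfl⟩ : ∃ i', i = i' + 1 := ⟨i - 1, by omega⟩
    rw [List.getD_cons_succ]
    by_cases hc : i' < n
    · rw [List.getD_append _ _ _ _ (by omega), hgetT i' hc]
      have := (hbd (i'+1) (by omega) (by omega)).2
      omega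
    · rw [List.getD_append_right _ _ _ _ (by omega)]
      have hk : i' - T.length = 0 ∨ i' - T.length = 1 := by omega
      rcases hk with hk | hk <;> rw [hk] <;> simp [List.getD] <;> omega
  have step1 : ra a (cfEval ((List.range (n + 1)).map A ++ [(a : ℤ) - 1, 1, (a : ℤ)])) =
      cfEval ((List.range (n + 1)).map A ++ [(a : ℤ)]) := by
    rw [hL, List.cons_append,
      ra_cfEval a (A 0) (T ++ [(a:ℤ)-1, 1, (a:ℤ)]) h11 h21 (n+3) (by omega)
        (by simp [hTlen]) hja1 hlt1]
    rw [List.take_succ_cons, List.take_append,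
      List.take_of_length_le (by omega), show n + 2 - T.length = 2 by omega]
    show cfEval ((A 0 :: T) ++ [(a:ℤ)-1, 1]) = _
    rw [cfEval_append_one, sub_add_cancel]
  refine ⟨step1, ?_⟩
  rw [step1]
  -- second application
  have h12 : ∀ x ∈ T ++ [(a:ℤ)], 1 ≤ x := by
    intro x hx
    rcases List.mem_append.mp hx with h | h
    · exact hT1 x h
    · simp at h; omega
  have h22 : ∀ m, (T ++ [(a:ℤ)]).getLast? = some m → 2 ≤ m := by
    intro m hm
    rw [List.getLast?_append_of_ne_nil _ (by simp)] at hm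
    simp at hm
    omega
  have hja2 : (a:ℤ) ≤ (A 0 :: (T ++ [(a:ℤ)])).getD (n+1) 0 := by
    rw [List.getD_cons_succ, List.getD_append_right _ _ _ _ (by omega),
      show n - T.length = 0 by omega]
    simp [List.getD]
  have hlt2 : ∀ i, 1 ≤ i → i < n + 1 → (A 0 :: (T ++ [(a:ℤ)])).getD i 0 < a := by
    intro i hi1 hi2
    obtain ⟨i', rfl⟩ : ∃ i', i = i' + 1 := ⟨i - 1, by omega⟩
    rw [List.getD_cons_succ, List.getD_append _ _ _ _ (by omega), hgetT i' (by omega)]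
    have := (hbd (i'+1) (by omega) (by omega)).2
    omega
  rw [hL, List.cons_append,
    ra_cfEval a (A 0) (T ++ [(a:ℤ)]) h12 h22 (n+1) (by omega) (by simp [hTlen]) hja2 hlt2]
  rw [List.take_succ_cons, List.take_append,
    List.take_of_length_le (by omega), show n - T.length = 0 by omega]
  simp
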